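/- Let ω = e^{2πi/3}, A = (1, ω, ω)/√3 and B = (1, ω², ω²)/√3 as complex vectors. Then A ⊗ A equals B ⊗ B up to a permutation of coordinates, and A ⊗ B equals B ⊗ A up to permutation, but A ⊗ A is not equal to any permutation of B ⊗ A multiplied by a global unit-modulus scalar, and A ⊗ B is not a permuted global-phase multiple of B ⊗ B. -/

import Mathlib

/-!
Both tensor squares consist of `1/3` once and of `ω/3`, `ω²/3` four times each, and `⊗` is
commutative. For the two negative claims compare the power sums `p_k M = ∑_{z ∈ M} z ^ k`: they
are multiplicative under `⊗` and a global phase `c` multiplies `p_k` by `c ^ k`. Since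
`ω ^ 2 + ω + 1 = 0`, the power sums of `B` are the negatives of those of `A` for `k = 1, 2`, and
none vanish; so a phase `c` relating `A ⊗ X` to `B ⊗ X` would satisfy both `c = -1` and `c² = -1`.
-/

open Complex

/-- Pairwise product (tensor product) of multisets of complex numbers. -/
def pProd (A B : Multiset ℂ) : Multiset ℂ :=
  (A.product B).map fun p => p.1 * p.2

open Multiset

lemma pProd_comm (A B : Multiset ℂ) : pProd A B = pProd B A := by
  change (A ×ˢ B).map _ = (B ×ˢ A).map _
  rw [← map_swap_product A B, map_map]
  exact map_congr rfl fun p _ => mul_comm _ _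

lemma pProd_zero (B : Multiset ℂ) : pProd 0 B = 0 := rfl

lemma pProd_cons (a : ℂ) (A B : Multiset ℂ) :
    pProd (a ::ₘ A) B = B.map (a * ·) + pProd A B := by
  change ((a ::ₘ A) ×ˢ B).map _ = _ + (A ×ˢ B).map _
  simp [map_map]

def powerSum (k : ℕ) (M : Multiset ℂ) : ℂ := (M.map (· ^ k)).sum

lemma powerSum_pProd (k : ℕ) (A B : Multiset ℂ) :
    powerSum k (pProd A B) = powerSum k A * powerSum k B := by
  induction A using Multiset.induction with
  | empty => simp [powerSum, pProd_zero]
  | cons a A ih =>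
    simp only [powerSum] at ih ⊢
    simp [pProd_cons, ih, mul_pow, sum_map_mul_left, add_mul]

lemma powerSum_map_mul (k : ℕ) (c : ℂ) (M : Multiset ℂ) :
    powerSum k (M.map (c * ·)) = c ^ k * powerSum k M := by
  simp [powerSum, map_map, mul_pow, sum_map_mul_left]

section PhaseRelation

variable {A B X : Multiset ℂ} {c : ℂ}

lemma pow_eq_neg_one_of_pProd_eq_map_mul {k : ℕ} (hB : powerSum k B = -powerSum k A)
    (hA : powerSum k A ≠ 0) (hX : powerSum k X ≠ 0) (h : pProd A X = (pProd B X).map (c * ·)) :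
    c ^ k = -1 := by
  have hk := congrArg (powerSum k) h
  rw [powerSum_map_mul, powerSum_pProd, powerSum_pProd, hB] at hk
  apply mul_right_cancel₀ (mul_ne_zero hA hX)
  linear_combination hk

lemma pProd_ne_map_mul (hB₁ : powerSum 1 B = -powerSum 1 A)
    (hB₂ : powerSum 2 B = -powerSum 2 A) (hA₁ : powerSum 1 A ≠ 0) (hA₂ : powerSum 2 A ≠ 0)
    (hX₁ : powerSum 1 X ≠ 0) (hX₂ : powerSum 2 X ≠ 0) :
    pProd A X ≠ (pProd B X).map (c * ·) := by
  intro h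
  have hc₁ := pow_eq_neg_one_of_pProd_eq_map_mul hB₁ hA₁ hX₁ h
  have hc₂ := pow_eq_neg_one_of_pProd_eq_map_mul hB₂ hA₂ hX₂ h
  rw [pow_one] at hc₁
  norm_num [hc₁] at hc₂

end PhaseRelation

lemma IsPrimitiveRoot.sq_add_self_add_one {ω : ℂ} (hω : IsPrimitiveRoot ω 3) :
    ω ^ 2 + ω + 1 = 0 := by
  have h := hω.geom_sum_eq_zero (by norm_num)
  simp only [Finset.sum_range_succ, Finset.sum_range_zero] at h
  linear_combination h

lemma IsPrimitiveRoot.one_add_two_mul_ne_zero {ω : ℂ} (hω : IsPrimitiveRoot ω 3) :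
    1 + 2 * ω ≠ 0 := by
  intro h
  have hsq : (1 + 2 * ω) ^ 2 = -3 := by linear_combination 4 * hω.sq_add_self_add_one
  norm_num [h] at hsq

noncomputable def phaseTriple (z r : ℂ) : Multiset ℂ := {1 / r, z / r, z / r}

lemma pProd_phaseTriple_self (z r : ℂ) :
    pProd (phaseTriple z r) (phaseTriple z r) =
      {1 / r ^ 2} + 4 • {z / r ^ 2} + 4 • {z ^ 2 / r ^ 2} := by
  have h : ∀ x y : ℂ, x / r * (y / r) = x * y / r ^ 2 := fun x y => by ring
  simp only [phaseTriple, insert_eq_cons, ← cons_zero, pProd_cons, pProd_zero, map_cons, map_zero,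
    h, one_mul, mul_one, ← sq, one_pow]
  simp only [← singleton_add, add_zero]
  abel

lemma powerSum_phaseTriple (k : ℕ) (z r : ℂ) :
    powerSum k (phaseTriple z r) = (1 + 2 * z ^ k) / r ^ k := by
  simp only [powerSum, phaseTriple, insert_eq_cons, map_cons, map_singleton, sum_cons,
    sum_singleton, div_pow, one_pow]
  ring

section PrimitiveCubeRoot

variable {ω r : ℂ}

lemma pProd_phaseTriple_self_eq_sq (hω : ω ^ 3 = 1) :
    pProd (phaseTriple ω r) (phaseTriple ω r) =
      pProd (phaseTriple (ω ^ 2) r) (phaseTriple (ω ^ 2) r) := by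
  have hω4 : (ω ^ 2) ^ 2 = ω := by linear_combination ω * hω
  rw [pProd_phaseTriple_self, pProd_phaseTriple_self, hω4, add_right_comm]

variable (hω : IsPrimitiveRoot ω 3) {k : ℕ} (hk : k.Coprime 3)
include hω hk

lemma powerSum_phaseTriple_sq :
    powerSum k (phaseTriple (ω ^ 2) r) = -powerSum k (phaseTriple ω r) := by
  have hωk := (hω.pow_of_coprime k hk).sq_add_self_add_one
  rw [powerSum_phaseTriple, powerSum_phaseTriple, ← pow_mul, mul_comm 2 k, pow_mul]
  linear_combination (2 / r ^ k) * hωk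

lemma powerSum_phaseTriple_ne_zero (hr : r ≠ 0) : powerSum k (phaseTriple ω r) ≠ 0 := by
  rw [powerSum_phaseTriple]
  exact div_ne_zero (hω.pow_of_coprime k hk).one_add_two_mul_ne_zero (pow_ne_zero k hr)

end PrimitiveCubeRoot

theorem permutation_flexible_catalysis_example :
    let ω : ℂ := Complex.exp (2 * Real.pi * Complex.I / 3)
    let A : Multiset ℂ := {1 / (Real.sqrt 3 : ℂ), ω / (Real.sqrt 3 : ℂ), ω / (Real.sqrt 3 : ℂ)}
    let B : Multiset ℂ := {1 / (Real.sqrt 3 : ℂ), ω ^ 2 / (Real.sqrt 3 : ℂ), ω ^ 2 / (Real.sqrt 3 : ℂ)}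
    pProd A A = pProd B B ∧
      pProd A B = pProd B A ∧
      ¬ (∃ c : ℂ, ‖c‖ = 1 ∧ pProd A A = (pProd B A).map fun z => c * z) ∧
      ¬ (∃ c : ℂ, ‖c‖ = 1 ∧ pProd A B = (pProd B B).map fun z => c * z) := by
  intro ω A B
  have hω : IsPrimitiveRoot ω 3 := by simpa using isPrimitiveRoot_exp 3 (by norm_num)
  have hr : (Real.sqrt 3 : ℂ) ≠ 0 := by simp
  have h1 : Nat.Coprime 1 3 := by norm_num
  have h2 : Nat.Coprime 2 3 := by norm_num
  have hB₁ := powerSum_phaseTriple_sq (r := Real.sqrt 3) hω h1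
  have hB₂ := powerSum_phaseTriple_sq (r := Real.sqrt 3) hω h2
  have hA₁ := powerSum_phaseTriple_ne_zero hω h1 hr
  have hA₂ := powerSum_phaseTriple_ne_zero hω h2 hr
  refine ⟨pProd_phaseTriple_self_eq_sq hω.pow_eq_one, pProd_comm A B, ?_, ?_⟩
  · rintro ⟨c, -, h⟩
    exact pProd_ne_map_mul hB₁ hB₂ hA₁ hA₂ hA₁ hA₂ h
  · rintro ⟨c, -, h⟩
    exact pProd_ne_map_mul hB₁ hB₂ hA₁ hA₂ (hB₁ ▸ neg_ne_zero.2 hA₁) (hB₂ ▸ neg_ne_zero.2 hA₂) h
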